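/- In the D_{n+1}^{(2)} perfect crystal B of level l, the extremal elements defined by b_0 = (0,...,0) and b_a = f_{i_a}^{φ_{i_a}(b_{a-1})} b_{a-1}, with i_a = a-1 for 1 ≤ a ≤ n+1 and i_a = 2n+1-a for n+2 ≤ a ≤ 2n, satisfy: b_a has l in coordinate x_a and zeros elsewhere (1 ≤ a ≤ n), and b_{n+a} has l in coordinate \bar{x}_{n-a+1} and zeros elsewhere (1 ≤ a ≤ n); moreover b_0 = f_0^l b_{2n} with ⟨lΛ_0, h_0⟩ = l. -/

import Mathlib

/- The perfect crystal B of level l for D_{n+1}^{(2)}: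
   elements (x_1,…,x_n,x_0,x̄_n,…,x̄_1) with x_0 ∈ {0,1}, x_i, x̄_i ≥ 0,
   Σ(x_i + x̄_i) ≤ l. -/
structure D2Elt where
  x : ℕ → ℤ
  x0 : ℤ
  xb : ℕ → ℤ

namespace D2Elt

def sumD (n : ℕ) (b : D2Elt) : ℤ := ∑ i ∈ Finset.Icc 1 n, (b.x i + b.xb i)

/-- membership in the level `l` perfect crystal `B` for `D_{n+1}^{(2)}` -/
def mem (n l : ℕ) (b : D2Elt) : Prop :=
  (b.x0 = 0 ∨ b.x0 = 1) ∧ (∀ i, 0 ≤ b.x i) ∧ (∀ i, 0 ≤ b.xb i) ∧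
  (∀ i, i = 0 ∨ n < i → b.x i = 0 ∧ b.xb i = 0) ∧
  sumD n b ≤ l

/-- the Kashiwara operator `f_0` -/
def f0 (b : D2Elt) : D2Elt :=
  if b.xb 1 ≤ b.x 1 then ⟨Function.update b.x 1 (b.x 1 + 1), b.x0, b.xb⟩
  else ⟨b.x, b.x0, Function.update b.xb 1 (b.xb 1 - 1)⟩

/-- the Kashiwara operator `f_i`, `1 ≤ i ≤ n-1` -/
def fmid (i : ℕ) (b : D2Elt) : D2Elt :=
  if b.xb (i+1) ≤ b.x (i+1) then
    ⟨Function.update (Function.update b.x i (b.x i - 1)) (i+1) (b.x (i+1) + 1), b.x0, b.xb⟩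
  else
    ⟨b.x, b.x0, Function.update (Function.update b.xb (i+1) (b.xb (i+1) - 1)) i (b.xb i + 1)⟩

/-- the Kashiwara operator `f_n` -/
def flast (n : ℕ) (b : D2Elt) : D2Elt :=
  if b.x0 = 0 then ⟨Function.update b.x n (b.x n - 1), 1, b.xb⟩
  else ⟨b.x, 0, Function.update b.xb n (b.xb n + 1)⟩

/-- the Kashiwara operator `f_i`, `0 ≤ i ≤ n` -/
def f (n i : ℕ) (b : D2Elt) : D2Elt :=
  if i = 0 then f0 b else if i = n then flast n b else fmid i b

/-- `φ_i(b)`; `f_i b` is defined exactly when `φ_i(b) > 0` -/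
def phi (n l i : ℕ) (b : D2Elt) : ℤ :=
  if i = 0 then (l : ℤ) - b.x0 - sumD n b + 2 * max (b.xb 1 - b.x 1) 0
  else if i = n then 2 * b.x n + b.x0
  else b.x i + max (b.xb (i+1) - b.x (i+1)) 0

/-- the index sequence `i_a = a-1` for `1 ≤ a ≤ n+1`, `i_a = 2n+1-a` for
`n+2 ≤ a ≤ 2n` -/
def idx (n a : ℕ) : ℕ := if a ≤ n + 1 then a - 1 else 2 * n + 1 - a

/-- the ground-state element `(0,…,0)` -/
def bzero : D2Elt := ⟨fun _ => 0, 0, fun _ => 0⟩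

/-- element with `l` in coordinate `x_p`, zeros elsewhere -/
def unitX (l p : ℕ) : D2Elt := ⟨fun i => if i = p then (l : ℤ) else 0, 0, fun _ => 0⟩

/-- element with `l` in coordinate `x̄_p`, zeros elsewhere -/
def unitXb (l p : ℕ) : D2Elt := ⟨fun _ => 0, 0, fun i => if i = p then (l : ℤ) else 0⟩

/-- the extremal elements `b_0 = (0,…,0)`, `b_a = f_{i_a}^{φ_{i_a}(b_{a-1})} b_{a-1}` -/
def bseq (n l : ℕ) : ℕ → D2Elt
  | 0 => bzero
  | a + 1 => (f n (idx n (a+1)))^[(phi n l (idx n (a+1)) (bseq n l a)).toNat] (bseq n l a)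

end D2Elt

/-! Each `b_a` has a single nonzero coordinate, equal to `l`, so every power of `f_{i_a}` in the
recursion stays within one branch of the definition of `f_{i_a}`: `f_0` fills `x_1`, `f_i` moves
`x_i` into `x_{i+1}`, `f_n` moves `x_n` into `x̄_n` in pairs of steps through `x_0 = 1`, then `f_i`
moves `x̄_{i+1}` into `x̄_i` and finally `f_0` empties `x̄_1`. In each case `φ_{i_a}(b_{a-1})` is
exactly the number of steps that transfers all `l` units. -/

namespace D2Elt

open Function

@[ext]
theorem ext {b c : D2Elt} (hx : b.x = c.x) (hx0 : b.x0 = c.x0) (hxb : b.xb = c.xb) : b = c := by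
  cases b; cases c; congr

theorem f_zero (n : ℕ) : f n 0 = f0 := rfl

theorem f_of_ne {n i : ℕ} (h0 : i ≠ 0) (hn : i ≠ n) : f n i = fmid i := by
  funext b; simp [f, h0, hn]

theorem f_self {n : ℕ} (hn : n ≠ 0) : f n n = flast n := by
  funext b; simp [f, hn]

theorem idx_succ_of_le {n a : ℕ} (h : a ≤ n) : idx n (a + 1) = a := by
  simp [idx, h]

theorem idx_add_succ {n a : ℕ} (ha : 1 ≤ a) : idx n (n + a + 1) = n - a := by
  rw [idx, if_neg (by omega)]; omega

theorem unitX_eq (l p : ℕ) : unitX l p = ⟨update 0 p l, 0, 0⟩ := by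
  ext j <;> simp [unitX, update_apply]

theorem unitXb_eq (l p : ℕ) : unitXb l p = ⟨0, 0, update 0 p l⟩ := by
  ext j <;> simp [unitXb, update_apply]

section Iterates

variable (m : ℕ) {b : D2Elt}

theorem iterate_f0_of_xb_le_x (h : b.xb 1 ≤ b.x 1) :
    f0^[m] b = ⟨update b.x 1 (b.x 1 + m), b.x0, b.xb⟩ := by
  induction m with
  | zero => simp
  | succ m ih =>
    rw [iterate_succ_apply', ih, f0, if_pos (by simp; omega)]
    ext j <;> simp [update_apply]
    omega

theorem iterate_f0_of_x_add_le_xb (h : b.x 1 + m ≤ b.xb 1) :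
    f0^[m] b = ⟨b.x, b.x0, update b.xb 1 (b.xb 1 - m)⟩ := by
  induction m with
  | zero => simp
  | succ m ih =>
    rw [iterate_succ_apply', ih (by omega), f0, if_neg (by simp; omega)]
    ext j <;> simp [update_apply]
    omega

theorem iterate_fmid_of_xb_le_x (i : ℕ) (h : b.xb (i + 1) ≤ b.x (i + 1)) :
    (fmid i)^[m] b =
      ⟨update (update b.x i (b.x i - m)) (i + 1) (b.x (i + 1) + m), b.x0, b.xb⟩ := by
  induction m with
  | zero => simp
  | succ m ih =>
    rw [iterate_succ_apply', ih, fmid, if_pos (by simp; omega)]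
    ext j <;> simp [update_apply]
    omega

theorem iterate_fmid_of_x_add_le_xb (i : ℕ) (h : b.x (i + 1) + m ≤ b.xb (i + 1)) :
    (fmid i)^[m] b =
      ⟨b.x, b.x0, update (update b.xb (i + 1) (b.xb (i + 1) - m)) i (b.xb i + m)⟩ := by
  induction m with
  | zero => simp
  | succ m ih =>
    rw [iterate_succ_apply', ih (by omega), fmid, if_neg (by simp; omega)]
    ext j <;> simp [update_apply]
    omega

theorem iterate_flast_two_mul (n : ℕ) (h : b.x0 = 0) :
    (flast n)^[2 * m] b = ⟨update b.x n (b.x n - m), 0, update b.xb n (b.xb n + m)⟩ := by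
  induction m with
  | zero => ext <;> simp [h]
  | succ m ih =>
    rw [show 2 * (m + 1) = 2 + 2 * m by ring, iterate_add_apply, ih]
    ext j <;> simp [flast, update_apply, add_assoc, sub_sub]

end Iterates

theorem toNat_phi_zero_bzero (n l : ℕ) : (phi n l 0 bzero).toNat = l := by
  simp [phi, bzero, sumD]

theorem toNat_phi_unitX {n l i : ℕ} (h0 : i ≠ 0) (hn : i ≠ n) :
    (phi n l i (unitX l i)).toNat = l := by
  simp [phi, unitX, h0, hn]

theorem toNat_phi_self_unitX {n : ℕ} (l : ℕ) (hn : n ≠ 0) :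
    (phi n l n (unitX l n)).toNat = 2 * l := by
  simp [phi, unitX, hn]; omega

theorem toNat_phi_unitXb {n l i : ℕ} (h0 : i ≠ 0) (hn : i ≠ n) :
    (phi n l i (unitXb l (i + 1))).toNat = l := by
  simp [phi, unitXb, h0, hn]

theorem bseq_zero (n l : ℕ) : bseq n l 0 = bzero := rfl

theorem bseq_eq_unitX (n l : ℕ) {a : ℕ} (ha : 1 ≤ a) (han : a ≤ n) :
    bseq n l a = unitX l a := by
  induction a, ha using Nat.le_induction with
  | base =>
    rw [bseq, idx_succ_of_le (Nat.zero_le n), bseq_zero, f_zero, toNat_phi_zero_bzero,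
      iterate_f0_of_xb_le_x l le_rfl, unitX_eq]
    ext j <;> simp [bzero, update_apply]
  | succ a ha ih =>
    rw [bseq, idx_succ_of_le (by omega), ih (by omega), toNat_phi_unitX (by omega) (by omega),
      f_of_ne (by omega) (by omega), unitX_eq, iterate_fmid_of_xb_le_x l a (by simp), unitX_eq]
    ext j <;> simp [update_apply]

theorem bseq_add_eq_unitXb (n l : ℕ) {a : ℕ} (ha : 1 ≤ a) (han : a ≤ n) :
    bseq n l (n + a) = unitXb l (n - a + 1) := by
  have hn : n ≠ 0 := by omega
  induction a, ha using Nat.le_induction with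
  | base =>
    rw [bseq, idx_succ_of_le le_rfl, bseq_eq_unitX n l (by omega) le_rfl, toNat_phi_self_unitX l hn,
      f_self hn, unitX_eq, iterate_flast_two_mul l n rfl, Nat.sub_add_cancel (by omega), unitXb_eq]
    ext j <;> simp [update_apply]
    omega
  | succ a ha ih =>
    have hprev : bseq n l (n + a) = unitXb l (n - a + 1) := ih (by omega)
    rw [← add_assoc, bseq, idx_add_succ ha, hprev, toNat_phi_unitXb (by omega) (by omega),
      f_of_ne (by omega) (by omega), unitXb_eq, iterate_fmid_of_x_add_le_xb l (n - a) (by simp),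
      unitXb_eq]
    ext j <;> simp [update_apply]
    omega

theorem iterate_f_zero_unitXb_one (n l : ℕ) : (f n 0)^[l] (unitXb l 1) = bzero := by
  rw [f_zero, unitXb_eq, iterate_f0_of_x_add_le_xb l (by simp)]
  ext j <;> simp [bzero, update_apply]
  omega

end D2Elt

theorem D2np1_extremal_elements_general (n l : ℕ) (hn : 2 ≤ n) :
    (∀ a, 1 ≤ a → a ≤ n → D2Elt.bseq n l a = D2Elt.unitX l a) ∧
    (∀ a, 1 ≤ a → a ≤ n → D2Elt.bseq n l (n + a) = D2Elt.unitXb l (n - a + 1)) ∧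
    (D2Elt.f n 0)^[l] (D2Elt.bseq n l (2*n)) = D2Elt.bseq n l 0 := by
  refine ⟨fun a => D2Elt.bseq_eq_unitX n l, fun a => D2Elt.bseq_add_eq_unitXb n l, ?_⟩
  have h2n : D2Elt.bseq n l (2 * n) = D2Elt.unitXb l 1 := by
    rw [two_mul, D2Elt.bseq_add_eq_unitXb n l (by omega) le_rfl, Nat.sub_self]
  rw [h2n, D2Elt.iterate_f_zero_unitXb_one, D2Elt.bseq_zero]

/-- in the `D_{n+1}^{(2)}` perfect crystal of level `l`, the
extremal elements satisfy: `b_a` has `l` in coordinate `x_a`, zeros elsewhere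
(`1 ≤ a ≤ n`); `b_{n+a}` has `l` in coordinate `x̄_{n-a+1}`, zeros elsewhere
(`1 ≤ a ≤ n`); and `b_0 = f_0^l b_{2n}` (with `⟨lΛ_0, h_0⟩ = l`). -/
theorem D2np1_extremal_elements (n l : ℕ) (hn : 2 ≤ n) (hl : 1 ≤ l) :
    (∀ a, 1 ≤ a → a ≤ n → D2Elt.bseq n l a = D2Elt.unitX l a) ∧
    (∀ a, 1 ≤ a → a ≤ n → D2Elt.bseq n l (n + a) = D2Elt.unitXb l (n - a + 1)) ∧
    (D2Elt.f n 0)^[l] (D2Elt.bseq n l (2*n)) = D2Elt.bseq n l 0 :=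
  D2np1_extremal_elements_general n l hn
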